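/- Consider two runs of SSGDA from the same initialization, one on the dataset pair (D_{m1}, D_{m2}) and one on (D_{m1}^{(i)}, D_{m2}), coupled so that both runs use the same sampled indices (i_t, j_t) at every iteration t. Let δ_t = sqrt(||x^t − x^{t′}||_2² + ||y^t − y^{t′}||_2² + ||z^t − z^{t′}||_2²) denote the joint distance between the two trajectories. Under joint l-Lipschitz continuity and joint L-smoothness of f and g, with step sizes bounded by η^{t′} := max{η^t, γ1^t, γ2^t} ≤ 1/L, there exist absolute constants a, b > 0 such that the conditional expectation over the index i_t satisfies E[δ_{t+1}] ≤ (1 + a·η^{t′}·L)·E[δ_t] + b·l·η^{t′}/m1: on the event i_t ≠ i (probability 1 − 1/m1) the joint update expands δ_t by at most a factor (1 + a·η^{t′}L), while on the event i_t = i (probability 1/m1) an additional additive term of at most b·l·η^{t′} arises from the two differing gradients. -/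

import Mathlib

/-!
STATEMENT 14: Two runs of SSGDA from the same initialization, one on `(D_{m1}, D_{m2})`
and one on `(D_{m1}^{(i)}, D_{m2})`, coupled so that both runs use the same sampled
indices `(i_t, j_t)` at every iteration. With `δ_t` the joint distance between the two
trajectories, under joint `l`-Lipschitz continuity and joint `L`-smoothness of `f, g`
and step sizes bounded by `η^{t′} = max{η^t, γ1^t, γ2^t} ≤ 1/L`, there exist absolute
constants `a, b > 0` such that the conditional expectation over the uniformly sampled
index `i_t` satisfies `E[δ_{t+1}] ≤ (1 + a·η^{t′}·L)·E[δ_t] + b·l·η^{t′}/m1`.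
-/

open MeasureTheory Finset

noncomputable section

abbrev Vec (d : ℕ) := EuclideanSpace ℝ (Fin d)

/-- Joint (`ℓ2`) distance between two parameter triples. -/
def jdist {dx dy dz : ℕ} (w w' : Vec dx × Vec dy × Vec dz) : ℝ :=
  Real.sqrt (‖w.1 - w'.1‖ ^ 2 + ‖w.2.1 - w'.2.1‖ ^ 2 + ‖w.2.2 - w'.2.2‖ ^ 2)

/-- Joint gradient (triple of partial gradients) of `h` at `w`. -/
def jgrad {dx dy dz : ℕ} (h : Vec dx × Vec dy × Vec dz → ℝ) (w : Vec dx × Vec dy × Vec dz) :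
    Vec dx × Vec dy × Vec dz :=
  (gradient (fun u => h (u, w.2.1, w.2.2)) w.1,
   gradient (fun v => h (w.1, v, w.2.2)) w.2.1,
   gradient (fun v => h (w.1, w.2.1, v)) w.2.2)

/-- One SSGDA iteration: a stochastic gradient descent step on `y`, an ascent step on `z`
(both on `g` at the sampled training example `ζ`), then a descent step on `x` (on `f` at
the sampled validation example `ξ`). -/
def ssgdaStep {dx dy dz : ℕ} {Ξ Z2 : Type}
    (f : Vec dx × Vec dy × Vec dz → Ξ → ℝ) (g : Vec dx × Vec dy × Vec dz → Z2 → ℝ)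
    (η γ1 γ2 : ℝ) (ξ : Ξ) (ζ : Z2)
    (w : Vec dx × Vec dy × Vec dz) : Vec dx × Vec dy × Vec dz :=
  let x := w.1
  let y := w.2.1
  let z := w.2.2
  let y' := y - γ1 • gradient (fun v => g (x, v, z) ζ) y
  let z' := z + γ2 • gradient (fun v => g (x, y', v) ζ) z
  let x' := x - η • gradient (fun u => f (u, y', z') ξ) x
  (x', y', z')

lemma jdist_nonneg {dx dy dz : ℕ} (w w' : Vec dx × Vec dy × Vec dz) : 0 ≤ jdist w w' :=
  Real.sqrt_nonneg _

lemma jdist_fst {dx dy dz : ℕ} (w w' : Vec dx × Vec dy × Vec dz) :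
    ‖w.1 - w'.1‖ ≤ jdist w w' := by
  rw [jdist]
  calc ‖w.1 - w'.1‖ = Real.sqrt (‖w.1 - w'.1‖ ^ 2) := (Real.sqrt_sq (norm_nonneg _)).symm
    _ ≤ _ := Real.sqrt_le_sqrt (by nlinarith [sq_nonneg ‖w.2.1 - w'.2.1‖, sq_nonneg ‖w.2.2 - w'.2.2‖])

lemma jdist_snd {dx dy dz : ℕ} (w w' : Vec dx × Vec dy × Vec dz) :
    ‖w.2.1 - w'.2.1‖ ≤ jdist w w' := by
  rw [jdist]
  calc ‖w.2.1 - w'.2.1‖ = Real.sqrt (‖w.2.1 - w'.2.1‖ ^ 2) := (Real.sqrt_sq (norm_nonneg _)).symm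
    _ ≤ _ := Real.sqrt_le_sqrt (by nlinarith [sq_nonneg ‖w.1 - w'.1‖, sq_nonneg ‖w.2.2 - w'.2.2‖])

lemma jdist_trd {dx dy dz : ℕ} (w w' : Vec dx × Vec dy × Vec dz) :
    ‖w.2.2 - w'.2.2‖ ≤ jdist w w' := by
  rw [jdist]
  calc ‖w.2.2 - w'.2.2‖ = Real.sqrt (‖w.2.2 - w'.2.2‖ ^ 2) := (Real.sqrt_sq (norm_nonneg _)).symm
    _ ≤ _ := Real.sqrt_le_sqrt (by nlinarith [sq_nonneg ‖w.1 - w'.1‖, sq_nonneg ‖w.2.1 - w'.2.1‖])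

lemma jdist_single₁ {dx dy dz : ℕ} (u u' : Vec dx) (y : Vec dy) (z : Vec dz) :
    jdist (u, y, z) (u', y, z) = ‖u - u'‖ := by
  simp [jdist, Real.sqrt_sq, norm_nonneg]

lemma sqrt3_le {a b c a' b' c' ta tb tc : ℝ}
    (ha : 0 ≤ a) (hb : 0 ≤ b) (hc : 0 ≤ c)
    (ha' : 0 ≤ a') (hb' : 0 ≤ b') (hc' : 0 ≤ c')
    (hta : 0 ≤ ta) (htb : 0 ≤ tb) (htc : 0 ≤ tc)
    (h1 : a' ≤ a + ta) (h2 : b' ≤ b + tb) (h3 : c' ≤ c + tc) :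
    Real.sqrt (a' ^ 2 + b' ^ 2 + c' ^ 2) ≤ Real.sqrt (a ^ 2 + b ^ 2 + c ^ 2) + (ta + tb + tc) := by
  set S := Real.sqrt (a ^ 2 + b ^ 2 + c ^ 2) with hSdef
  have hS0 : 0 ≤ S := Real.sqrt_nonneg _
  have hSsq : S ^ 2 = a ^ 2 + b ^ 2 + c ^ 2 := Real.sq_sqrt (by positivity)
  have haS : a ≤ S := by nlinarith [sq_nonneg (S - a)]
  have hbS : b ≤ S := by nlinarith [sq_nonneg (S - b)]
  have hcS : c ≤ S := by nlinarith [sq_nonneg (S - c)]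
  have e1 : a' ^ 2 ≤ (a + ta) ^ 2 := by nlinarith
  have e2 : b' ^ 2 ≤ (b + tb) ^ 2 := by nlinarith
  have e3 : c' ^ 2 ≤ (c + tc) ^ 2 := by nlinarith
  have f1 : a * ta ≤ S * ta := mul_le_mul_of_nonneg_right haS hta
  have f2 : b * tb ≤ S * tb := mul_le_mul_of_nonneg_right hbS htb
  have f3 : c * tc ≤ S * tc := mul_le_mul_of_nonneg_right hcS htc
  have key : a' ^ 2 + b' ^ 2 + c' ^ 2 ≤ (S + (ta + tb + tc)) ^ 2 := by
    nlinarith [mul_nonneg hta htb, mul_nonneg hta htc, mul_nonneg htb htc]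
  calc Real.sqrt (a' ^ 2 + b' ^ 2 + c' ^ 2) ≤ Real.sqrt ((S + (ta + tb + tc)) ^ 2) :=
        Real.sqrt_le_sqrt key
    _ = S + (ta + tb + tc) := Real.sqrt_sq (by positivity)

lemma norm_gradient_le {F : Type*} [NormedAddCommGroup F] [InnerProductSpace ℝ F]
    [CompleteSpace F] (h : F → ℝ) (x : F) {l : ℝ} (hl : 0 ≤ l)
    (hlip : ∀ u u', |h u - h u'| ≤ l * ‖u - u'‖) : ‖gradient h x‖ ≤ l := by
  have hLip : LipschitzWith l.toNNReal h := by
    apply LipschitzWith.of_dist_le_mul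
    intro u u'
    rw [Real.dist_eq, dist_eq_norm, Real.coe_toNNReal l hl]
    exact hlip u u'
  have hfd := norm_fderiv_le_of_lipschitz ℝ hLip (x₀ := x)
  rw [gradient, LinearIsometryEquiv.norm_map]
  rwa [Real.coe_toNNReal l hl] at hfd


lemma yz_bound {dx dy dz : ℕ} {Z2 : Type}
    (g : Vec dx × Vec dy × Vec dz → Z2 → ℝ) {L : ℝ} (hL : 0 < L)
    (hsg : ∀ w w' ζ,
      jdist (jgrad (fun v => g v ζ) w) (jgrad (fun v => g v ζ) w') ≤ L * jdist w w')
    (ζ : Z2) {γ1 γ2 : ℝ} (hγ1 : 0 ≤ γ1) (hγ2 : 0 ≤ γ2)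
    (x x' : Vec dx) (y y' : Vec dy) (z z' : Vec dz) :
    jdist (x, y - γ1 • gradient (fun v => g (x, v, z) ζ) y,
           z + γ2 • gradient (fun v => g (x, y - γ1 • gradient (fun v => g (x, v, z) ζ) y, v) ζ) z)
          (x', y' - γ1 • gradient (fun v => g (x', v, z') ζ) y',
           z' + γ2 • gradient (fun v => g (x', y' - γ1 • gradient (fun v => g (x', v, z') ζ) y', v) ζ) z')
      ≤ (1 + γ1 * L) * (1 + γ2 * L) * jdist (x, y, z) (x', y', z') := by
  set δ := jdist (x, y, z) (x', y', z') with hδdef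
  have hδ0 : 0 ≤ δ := jdist_nonneg _ _
  set G1 := gradient (fun v => g (x, v, z) ζ) y with hG1
  set G2 := gradient (fun v => g (x', v, z') ζ) y' with hG2
  set Y1 := y - γ1 • G1 with hY1
  set Y2 := y' - γ1 • G2 with hY2
  set H1 := gradient (fun v => g (x, Y1, v) ζ) z with hH1
  set H2 := gradient (fun v => g (x', Y2, v) ζ) z' with hH2
  set Z1 := z + γ2 • H1 with hZ1
  set Z2v := z' + γ2 • H2 with hZ2
  -- gradient difference in the y-slot
  have hgy : ‖G1 - G2‖ ≤ L * δ := by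
    have hcomp := jdist_snd (jgrad (fun v => g v ζ) (x, y, z)) (jgrad (fun v => g v ζ) (x', y', z'))
    have := hcomp.trans (hsg (x, y, z) (x', y', z') ζ)
    simpa [jgrad, hG1, hG2] using this
  have hY : ‖Y1 - Y2‖ ≤ ‖y - y'‖ + γ1 * (L * δ) := by
    have heq : Y1 - Y2 = (y - y') - γ1 • (G1 - G2) := by
      rw [hY1, hY2, smul_sub]; abel
    rw [heq]
    calc ‖(y - y') - γ1 • (G1 - G2)‖ ≤ ‖y - y'‖ + ‖γ1 • (G1 - G2)‖ := norm_sub_le _ _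
      _ = ‖y - y'‖ + γ1 * ‖G1 - G2‖ := by rw [norm_smul, Real.norm_of_nonneg hγ1]
      _ ≤ ‖y - y'‖ + γ1 * (L * δ) := by
          exact add_le_add_right (mul_le_mul_of_nonneg_left hgy hγ1) _
  set D1 := jdist (x, Y1, z) (x', Y2, z') with hD1def
  have hD10 : 0 ≤ D1 := jdist_nonneg _ _
  have hD1 : D1 ≤ δ + γ1 * (L * δ) := by
    have h := sqrt3_le (a := ‖x - x'‖) (b := ‖y - y'‖) (c := ‖z - z'‖)
      (a' := ‖x - x'‖) (b' := ‖Y1 - Y2‖) (c' := ‖z - z'‖)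
      (ta := 0) (tb := γ1 * (L * δ)) (tc := 0)
      (norm_nonneg _) (norm_nonneg _) (norm_nonneg _)
      (norm_nonneg _) (norm_nonneg _) (norm_nonneg _)
      le_rfl (by positivity) le_rfl
      (by simp) hY (by simp)
    have e1 : D1 = Real.sqrt (‖x - x'‖ ^ 2 + ‖Y1 - Y2‖ ^ 2 + ‖z - z'‖ ^ 2) := rfl
    have e2 : δ = Real.sqrt (‖x - x'‖ ^ 2 + ‖y - y'‖ ^ 2 + ‖z - z'‖ ^ 2) := rfl
    rw [← e1, ← e2] at h; linarith
  -- gradient difference in the z-slot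
  have hgz : ‖H1 - H2‖ ≤ L * D1 := by
    have hcomp := jdist_trd (jgrad (fun v => g v ζ) (x, Y1, z)) (jgrad (fun v => g v ζ) (x', Y2, z'))
    have := hcomp.trans (hsg (x, Y1, z) (x', Y2, z') ζ)
    simpa [jgrad, hH1, hH2, hD1def] using this
  have hZ : ‖Z1 - Z2v‖ ≤ ‖z - z'‖ + γ2 * (L * D1) := by
    have heq : Z1 - Z2v = (z - z') + γ2 • (H1 - H2) := by
      rw [hZ1, hZ2, smul_sub]; abel
    rw [heq]
    calc ‖(z - z') + γ2 • (H1 - H2)‖ ≤ ‖z - z'‖ + ‖γ2 • (H1 - H2)‖ := norm_add_le _ _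
      _ = ‖z - z'‖ + γ2 * ‖H1 - H2‖ := by rw [norm_smul, Real.norm_of_nonneg hγ2]
      _ ≤ ‖z - z'‖ + γ2 * (L * D1) := by
          exact add_le_add_right (mul_le_mul_of_nonneg_left hgz hγ2) _
  have hD2 : jdist (x, Y1, Z1) (x', Y2, Z2v) ≤ D1 + γ2 * (L * D1) := by
    have h := sqrt3_le (a := ‖x - x'‖) (b := ‖Y1 - Y2‖) (c := ‖z - z'‖)
      (a' := ‖x - x'‖) (b' := ‖Y1 - Y2‖) (c' := ‖Z1 - Z2v‖)
      (ta := 0) (tb := 0) (tc := γ2 * (L * D1))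
      (norm_nonneg _) (norm_nonneg _) (norm_nonneg _)
      (norm_nonneg _) (norm_nonneg _) (norm_nonneg _)
      le_rfl le_rfl (by positivity)
      (by simp) (by simp) hZ
    have e1 : jdist (x, Y1, Z1) (x', Y2, Z2v)
        = Real.sqrt (‖x - x'‖ ^ 2 + ‖Y1 - Y2‖ ^ 2 + ‖Z1 - Z2v‖ ^ 2) := rfl
    have e2 : D1 = Real.sqrt (‖x - x'‖ ^ 2 + ‖Y1 - Y2‖ ^ 2 + ‖z - z'‖ ^ 2) := rfl
    rw [← e1, ← e2] at h; linarith
  calc jdist (x, Y1, Z1) (x', Y2, Z2v) ≤ D1 + γ2 * (L * D1) := hD2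
    _ = (1 + γ2 * L) * D1 := by ring
    _ ≤ (1 + γ2 * L) * (δ + γ1 * (L * δ)) := by
        apply mul_le_mul_of_nonneg_left hD1 (by positivity)
    _ = (1 + γ1 * L) * (1 + γ2 * L) * δ := by ring

lemma step_same {dx dy dz : ℕ} {Ξ Z2 : Type}
    (f : Vec dx × Vec dy × Vec dz → Ξ → ℝ) (g : Vec dx × Vec dy × Vec dz → Z2 → ℝ)
    {L : ℝ} (hL : 0 < L)
    (hsf : ∀ w w' ξ,
      jdist (jgrad (fun v => f v ξ) w) (jgrad (fun v => f v ξ) w') ≤ L * jdist w w')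
    (hsg : ∀ w w' ζ,
      jdist (jgrad (fun v => g v ζ) w) (jgrad (fun v => g v ζ) w') ≤ L * jdist w w')
    (ξ : Ξ) (ζ : Z2) {η γ1 γ2 : ℝ} (hη : 0 ≤ η) (hγ1 : 0 ≤ γ1) (hγ2 : 0 ≤ γ2)
    (x x' : Vec dx) (y y' : Vec dy) (z z' : Vec dz) :
    jdist (ssgdaStep f g η γ1 γ2 ξ ζ (x, y, z)) (ssgdaStep f g η γ1 γ2 ξ ζ (x', y', z'))
      ≤ (1 + γ1 * L) * (1 + γ2 * L) * (1 + η * L) * jdist (x, y, z) (x', y', z') := by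
  set δ := jdist (x, y, z) (x', y', z') with hδdef
  have hδ0 : 0 ≤ δ := jdist_nonneg _ _
  have hyz := yz_bound g hL hsg ζ hγ1 hγ2 x x' y y' z z'
  set Y1 := y - γ1 • gradient (fun v => g (x, v, z) ζ) y with hY1
  set Y2 := y' - γ1 • gradient (fun v => g (x', v, z') ζ) y' with hY2
  set Z1 := z + γ2 • gradient (fun v => g (x, Y1, v) ζ) z with hZ1
  set Z2v := z' + γ2 • gradient (fun v => g (x', Y2, v) ζ) z' with hZ2
  set Gx1 := gradient (fun u => f (u, Y1, Z1) ξ) x with hGx1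
  set Gx2 := gradient (fun u => f (u, Y2, Z2v) ξ) x' with hGx2
  set X1 := x - η • Gx1 with hX1
  set X2 := x' - η • Gx2 with hX2
  have hstep1 : ssgdaStep f g η γ1 γ2 ξ ζ (x, y, z) = (X1, Y1, Z1) := rfl
  have hstep2 : ssgdaStep f g η γ1 γ2 ξ ζ (x', y', z') = (X2, Y2, Z2v) := rfl
  rw [hstep1, hstep2]
  set D2 := jdist (x, Y1, Z1) (x', Y2, Z2v) with hD2def
  have hD20 : 0 ≤ D2 := jdist_nonneg _ _
  have hgx : ‖Gx1 - Gx2‖ ≤ L * D2 := by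
    have hcomp := jdist_fst (jgrad (fun v => f v ξ) (x, Y1, Z1)) (jgrad (fun v => f v ξ) (x', Y2, Z2v))
    have := hcomp.trans (hsf (x, Y1, Z1) (x', Y2, Z2v) ξ)
    simpa [jgrad, hGx1, hGx2, hD2def] using this
  have hX : ‖X1 - X2‖ ≤ ‖x - x'‖ + η * (L * D2) := by
    have heq : X1 - X2 = (x - x') - η • (Gx1 - Gx2) := by
      rw [hX1, hX2, smul_sub]; abel
    rw [heq]
    calc ‖(x - x') - η • (Gx1 - Gx2)‖ ≤ ‖x - x'‖ + ‖η • (Gx1 - Gx2)‖ := norm_sub_le _ _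
      _ = ‖x - x'‖ + η * ‖Gx1 - Gx2‖ := by rw [norm_smul, Real.norm_of_nonneg hη]
      _ ≤ ‖x - x'‖ + η * (L * D2) := by
          exact add_le_add_right (mul_le_mul_of_nonneg_left hgx hη) _
  have hD3 : jdist (X1, Y1, Z1) (X2, Y2, Z2v) ≤ D2 + η * (L * D2) := by
    have h := sqrt3_le (a := ‖x - x'‖) (b := ‖Y1 - Y2‖) (c := ‖Z1 - Z2v‖)
      (a' := ‖X1 - X2‖) (b' := ‖Y1 - Y2‖) (c' := ‖Z1 - Z2v‖)
      (ta := η * (L * D2)) (tb := 0) (tc := 0)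
      (norm_nonneg _) (norm_nonneg _) (norm_nonneg _)
      (norm_nonneg _) (norm_nonneg _) (norm_nonneg _)
      (by positivity) le_rfl le_rfl
      hX (by simp) (by simp)
    have e1 : jdist (X1, Y1, Z1) (X2, Y2, Z2v)
        = Real.sqrt (‖X1 - X2‖ ^ 2 + ‖Y1 - Y2‖ ^ 2 + ‖Z1 - Z2v‖ ^ 2) := rfl
    have e2 : D2 = Real.sqrt (‖x - x'‖ ^ 2 + ‖Y1 - Y2‖ ^ 2 + ‖Z1 - Z2v‖ ^ 2) := rfl
    rw [← e1, ← e2] at h; linarith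
  calc jdist (X1, Y1, Z1) (X2, Y2, Z2v) ≤ D2 + η * (L * D2) := hD3
    _ = (1 + η * L) * D2 := by ring
    _ ≤ (1 + η * L) * ((1 + γ1 * L) * (1 + γ2 * L) * δ) := by
        exact mul_le_mul_of_nonneg_left hyz (by positivity)
    _ = (1 + γ1 * L) * (1 + γ2 * L) * (1 + η * L) * δ := by ring

lemma step_diff {dx dy dz : ℕ} {Ξ Z2 : Type}
    (f : Vec dx × Vec dy × Vec dz → Ξ → ℝ) (g : Vec dx × Vec dy × Vec dz → Z2 → ℝ)
    {l L : ℝ} (hl : 0 < l) (hL : 0 < L)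
    (hlipf : ∀ w w' ξ, |f w ξ - f w' ξ| ≤ l * jdist w w')
    (hsg : ∀ w w' ζ,
      jdist (jgrad (fun v => g v ζ) w) (jgrad (fun v => g v ζ) w') ≤ L * jdist w w')
    (ξ ξ' : Ξ) (ζ : Z2) {η γ1 γ2 : ℝ} (hη : 0 ≤ η) (hγ1 : 0 ≤ γ1) (hγ2 : 0 ≤ γ2)
    (x x' : Vec dx) (y y' : Vec dy) (z z' : Vec dz) :
    jdist (ssgdaStep f g η γ1 γ2 ξ ζ (x, y, z)) (ssgdaStep f g η γ1 γ2 ξ' ζ (x', y', z'))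
      ≤ (1 + γ1 * L) * (1 + γ2 * L) * jdist (x, y, z) (x', y', z') + 2 * η * l := by
  set δ := jdist (x, y, z) (x', y', z') with hδdef
  have hδ0 : 0 ≤ δ := jdist_nonneg _ _
  have hyz := yz_bound g hL hsg ζ hγ1 hγ2 x x' y y' z z'
  set Y1 := y - γ1 • gradient (fun v => g (x, v, z) ζ) y with hY1
  set Y2 := y' - γ1 • gradient (fun v => g (x', v, z') ζ) y' with hY2
  set Z1 := z + γ2 • gradient (fun v => g (x, Y1, v) ζ) z with hZ1
  set Z2v := z' + γ2 • gradient (fun v => g (x', Y2, v) ζ) z' with hZ2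
  set Gx1 := gradient (fun u => f (u, Y1, Z1) ξ) x with hGx1
  set Gx2 := gradient (fun u => f (u, Y2, Z2v) ξ') x' with hGx2
  set X1 := x - η • Gx1 with hX1
  set X2 := x' - η • Gx2 with hX2
  have hstep1 : ssgdaStep f g η γ1 γ2 ξ ζ (x, y, z) = (X1, Y1, Z1) := rfl
  have hstep2 : ssgdaStep f g η γ1 γ2 ξ' ζ (x', y', z') = (X2, Y2, Z2v) := rfl
  rw [hstep1, hstep2]
  set D2 := jdist (x, Y1, Z1) (x', Y2, Z2v) with hD2def
  have hD20 : 0 ≤ D2 := jdist_nonneg _ _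
  have hg1 : ‖Gx1‖ ≤ l := by
    apply norm_gradient_le _ _ hl.le
    intro u u'
    have := hlipf (u, Y1, Z1) (u', Y1, Z1) ξ
    rwa [jdist_single₁] at this
  have hg2 : ‖Gx2‖ ≤ l := by
    apply norm_gradient_le _ _ hl.le
    intro u u'
    have := hlipf (u, Y2, Z2v) (u', Y2, Z2v) ξ'
    rwa [jdist_single₁] at this
  have hX : ‖X1 - X2‖ ≤ ‖x - x'‖ + 2 * η * l := by
    have heq : X1 - X2 = (x - x') - η • (Gx1 - Gx2) := by
      rw [hX1, hX2, smul_sub]; abel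
    rw [heq]
    have hGd : ‖Gx1 - Gx2‖ ≤ 2 * l := by
      calc ‖Gx1 - Gx2‖ ≤ ‖Gx1‖ + ‖Gx2‖ := norm_sub_le _ _
        _ ≤ 2 * l := by linarith
    calc ‖(x - x') - η • (Gx1 - Gx2)‖ ≤ ‖x - x'‖ + ‖η • (Gx1 - Gx2)‖ := norm_sub_le _ _
      _ = ‖x - x'‖ + η * ‖Gx1 - Gx2‖ := by rw [norm_smul, Real.norm_of_nonneg hη]
      _ ≤ ‖x - x'‖ + η * (2 * l) := by
          exact add_le_add_right (mul_le_mul_of_nonneg_left hGd hη) _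
      _ = ‖x - x'‖ + 2 * η * l := by ring
  have hD3 : jdist (X1, Y1, Z1) (X2, Y2, Z2v) ≤ D2 + 2 * η * l := by
    have h := sqrt3_le (a := ‖x - x'‖) (b := ‖Y1 - Y2‖) (c := ‖Z1 - Z2v‖)
      (a' := ‖X1 - X2‖) (b' := ‖Y1 - Y2‖) (c' := ‖Z1 - Z2v‖)
      (ta := 2 * η * l) (tb := 0) (tc := 0)
      (norm_nonneg _) (norm_nonneg _) (norm_nonneg _)
      (norm_nonneg _) (norm_nonneg _) (norm_nonneg _)
      (by positivity) le_rfl le_rfl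
      hX (by simp) (by simp)
    have e1 : jdist (X1, Y1, Z1) (X2, Y2, Z2v)
        = Real.sqrt (‖X1 - X2‖ ^ 2 + ‖Y1 - Y2‖ ^ 2 + ‖Z1 - Z2v‖ ^ 2) := rfl
    have e2 : D2 = Real.sqrt (‖x - x'‖ ^ 2 + ‖Y1 - Y2‖ ^ 2 + ‖Z1 - Z2v‖ ^ 2) := rfl
    rw [← e1, ← e2] at h; linarith
  linarith


theorem stmt_14 :
    ∃ a b : ℝ, 0 < a ∧ 0 < b ∧
      ∀ (dx dy dz : ℕ) (Ξ Z2 : Type)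
        (f : Vec dx × Vec dy × Vec dz → Ξ → ℝ)
        (g : Vec dx × Vec dy × Vec dz → Z2 → ℝ)
        (l L : ℝ), 0 < l → 0 < L →
        -- joint Lipschitz continuity of `f` and `g`
        (∀ w w' ξ, |f w ξ - f w' ξ| ≤ l * jdist w w') →
        (∀ w w' ζ, |g w ζ - g w' ζ| ≤ l * jdist w w') →
        -- joint smoothness of `f` and `g`
        (∀ w w' ξ,
          jdist (jgrad (fun v => f v ξ) w) (jgrad (fun v => f v ξ) w') ≤ L * jdist w w') →
        (∀ w w' ζ,
          jdist (jgrad (fun v => g v ζ) w) (jgrad (fun v => g v ζ) w') ≤ L * jdist w w') →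
      ∀ (m1 : ℕ), 0 < m1 →
      -- the validation set, the perturbed coordinate `i` and its replacement `ξ̃_i`
      ∀ (ξs : Fin m1 → Ξ) (i : Fin m1) (ξrep : Ξ)
      -- the common sampled training example `ζ_{j_t}` and the step sizes at iteration `t`
        (ζ : Z2) (η γ1 γ2 : ℝ), 0 ≤ η → 0 ≤ γ1 → 0 ≤ γ2 →
        max η (max γ1 γ2) ≤ 1 / L →
      -- the current iterates of the two coupled trajectories
      ∀ w w' : Vec dx × Vec dy × Vec dz,
        -- averaging over the uniformly sampled validation index `i_t`
        (1 / (m1 : ℝ)) * ∑ it : Fin m1,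
            jdist (ssgdaStep f g η γ1 γ2 (ξs it) ζ w)
              (ssgdaStep f g η γ1 γ2 (Function.update ξs i ξrep it) ζ w')
          ≤ (1 + a * max η (max γ1 γ2) * L) * jdist w w'
            + b * l * max η (max γ1 γ2) / m1 := by
  refine ⟨7, 2, by norm_num, by norm_num, ?_⟩
  intro dx dy dz Ξ Z2 f g l L hl hL hlipf hlipg hsf hsg m1 hm1 ξs i ξrep ζ η γ1 γ2 hη hγ1 hγ2
    hmax w w'
  obtain ⟨x, y, z⟩ := w
  obtain ⟨x', y', z'⟩ := w'
  set η' := max η (max γ1 γ2) with hη'def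
  have hηη' : η ≤ η' := le_max_left _ _
  have hγ1η' : γ1 ≤ η' := le_trans (le_max_left _ _) (le_max_right _ _)
  have hγ2η' : γ2 ≤ η' := le_trans (le_max_right _ _) (le_max_right _ _)
  have hη'0 : 0 ≤ η' := le_trans hη hηη'
  have hη'L : η' * L ≤ 1 := by
    have := (le_div_iff₀ hL).mp hmax
    linarith
  set δ := jdist (x, y, z) (x', y', z') with hδdef
  have hδ0 : 0 ≤ δ := jdist_nonneg _ _
  have hm1' : (0 : ℝ) < m1 := Nat.cast_pos.mpr hm1
  set C3 := (1 + γ1 * L) * (1 + γ2 * L) * (1 + η * L) with hC3def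
  have hC30 : 0 ≤ C3 := by positivity
  have hterm : ∀ it : Fin m1,
      jdist (ssgdaStep f g η γ1 γ2 (ξs it) ζ (x, y, z))
        (ssgdaStep f g η γ1 γ2 (Function.update ξs i ξrep it) ζ (x', y', z'))
      ≤ C3 * δ + (if it = i then 2 * η * l else 0) := by
    intro it
    by_cases hit : it = i
    · subst hit
      rw [Function.update_self, if_pos rfl]
      have h := step_diff f g hl hL hlipf hsg (ξs it) ξrep ζ hη hγ1 hγ2 x x' y y' z z'
      have hmono : (1 + γ1 * L) * (1 + γ2 * L) * δ ≤ C3 * δ := by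
        rw [hC3def]
        have hdiff : (1 + γ1 * L) * (1 + γ2 * L) * (1 + η * L) * δ
            - (1 + γ1 * L) * (1 + γ2 * L) * δ
            = (1 + γ1 * L) * (1 + γ2 * L) * (η * L) * δ := by ring
        have hpos : 0 ≤ (1 + γ1 * L) * (1 + γ2 * L) * (η * L) * δ := by positivity
        linarith
      linarith
    · rw [Function.update_of_ne hit, if_neg hit, add_zero]
      exact step_same f g hL hsf hsg (ξs it) ζ hη hγ1 hγ2 x x' y y' z z'
  have hsum : (∑ it : Fin m1,
      jdist (ssgdaStep f g η γ1 γ2 (ξs it) ζ (x, y, z))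
        (ssgdaStep f g η γ1 γ2 (Function.update ξs i ξrep it) ζ (x', y', z')))
      ≤ m1 * (C3 * δ) + 2 * η * l := by
    calc (∑ it : Fin m1, jdist (ssgdaStep f g η γ1 γ2 (ξs it) ζ (x, y, z))
          (ssgdaStep f g η γ1 γ2 (Function.update ξs i ξrep it) ζ (x', y', z')))
        ≤ ∑ it : Fin m1, (C3 * δ + (if it = i then 2 * η * l else 0)) :=
          Finset.sum_le_sum (fun it _ => hterm it)
      _ = m1 * (C3 * δ) + 2 * η * l := by
          rw [Finset.sum_add_distrib, Finset.sum_const, Finset.sum_ite_eq' Finset.univ i]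
          simp [Finset.card_univ, mul_comm]
  have hfinal1 : (1 / (m1 : ℝ)) * (∑ it : Fin m1,
      jdist (ssgdaStep f g η γ1 γ2 (ξs it) ζ (x, y, z))
        (ssgdaStep f g η γ1 γ2 (Function.update ξs i ξrep it) ζ (x', y', z')))
      ≤ C3 * δ + 2 * η * l / m1 := by
    have h := mul_le_mul_of_nonneg_left hsum (by positivity : (0:ℝ) ≤ 1 / m1)
    have heq : (1 / (m1 : ℝ)) * (m1 * (C3 * δ) + 2 * η * l) = C3 * δ + 2 * η * l / m1 := by
      field_simp
    linarith
  have hC3le : C3 ≤ 1 + 7 * (η' * L) := by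
    have h1 : 1 + γ1 * L ≤ 1 + η' * L := by nlinarith
    have h2 : 1 + γ2 * L ≤ 1 + η' * L := by nlinarith
    have h3 : 1 + η * L ≤ 1 + η' * L := by nlinarith
    have hu0 : 0 ≤ η' * L := by positivity
    have hstep1 : C3 ≤ (1 + η' * L) * (1 + η' * L) * (1 + η' * L) := by
      rw [hC3def]
      gcongr
    nlinarith [sq_nonneg (η' * L), mul_nonneg hu0 hu0]
  have htail : 2 * η * l / m1 ≤ 2 * l * η' / m1 := by
    have hnum : 2 * η * l ≤ 2 * l * η' := by nlinarith
    exact (div_le_div_iff_of_pos_right hm1').mpr hnum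
  calc (1 / (m1 : ℝ)) * (∑ it : Fin m1,
        jdist (ssgdaStep f g η γ1 γ2 (ξs it) ζ (x, y, z))
          (ssgdaStep f g η γ1 γ2 (Function.update ξs i ξrep it) ζ (x', y', z')))
      ≤ C3 * δ + 2 * η * l / m1 := hfinal1
    _ ≤ (1 + 7 * η' * L) * δ + 2 * l * η' / m1 := by
        have := mul_le_mul_of_nonneg_right hC3le hδ0
        have h2 : (1 + 7 * (η' * L)) * δ = (1 + 7 * η' * L) * δ := by ring
        linarith


end
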